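/- arXiv:1511.02559 — 4 statements merged into one kernel-verified Lean document; each statement's English description precedes it below -/
import Mathlib

section
/- Let (g, ⟨,⟩_g) be a finite-dimensional quadratic Lie algebra (the bilinear form is symmetric, non-degenerate, and invariant), and let r^♭_± : g → g be linear maps satisfying r^♭_+ − r^♭_- = Id_g and ⟨r^♭_+(x₁), x₂⟩_g + ⟨x₁, r^♭_-(x₂)⟩_g = 0 for all x₁, x₂ ∈ g. Set f_+ = Im(r^♭_+) and f_- = Im(r^♭_-). Then ker(r^♭_+) = f_-^⊥, ker(r^♭_-) = f_+^⊥, f_+^⊥ ⊆ f_+, and f_-^⊥ ⊆ f_-. -/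
/-! The maps `r₊` and `-r₋` form a `B`-adjoint pair summing to the identity. For an adjoint
pair `(f, g)` of a nondegenerate reflexive form, `ker f = (range g)^⊥`; and when `f + g = id`,
every `x ∈ ker g` satisfies `x = f x`, so `ker g ≤ range f`. -/

open LinearMap

namespace LinearMap.BilinForm

variable {R M : Type*} [CommSemiring R] [AddCommMonoid M] [Module R M]
  {B : LinearMap.BilinForm R M}

theorem isAdjointPair_swap_of_isSymm (hB : B.IsSymm) {f g : M → M}
    (h : LinearMap.IsAdjointPair B B f g) : LinearMap.IsAdjointPair B B g f := fun x y => by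
  rw [hB.eq, ← h, hB.eq]

theorem ker_eq_orthogonal_range_of_isAdjointPair (hB : B.IsRefl) (hsep : B.SeparatingLeft)
    {f g : Module.End R M} (h : LinearMap.IsAdjointPair B B f g) :
    ker f = B.orthogonal (range g) := by
  ext x
  simp only [mem_ker, mem_orthogonal_iff, mem_range, forall_exists_index, forall_apply_eq_imp_iff]
  constructor
  · intro hx y
    apply hB
    rw [← h, hx, map_zero, LinearMap.zero_apply]
  · intro hx
    exact hsep _ fun y => by rw [h]; exact hB _ _ (hx y)

end LinearMap.BilinForm

theorem LinearMap.ker_le_range_of_add_eq_id {R M : Type*} [Semiring R] [AddCommMonoid M]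
    [Module R M] {f g : Module.End R M} (h : f + g = LinearMap.id) : ker g ≤ range f :=
  fun x hx => ⟨x, by simpa [mem_ker.mp hx] using congr($h x)⟩

theorem stmt2_general {k g : Type*} [Field k] [LieRing g] [LieAlgebra k g]
    (B : LinearMap.BilinForm k g)
    (hsym : ∀ a b : g, B a b = B b a)
    (hnondeg : B.Nondegenerate)
    (rp rm : g →ₗ[k] g)
    (hdiff : rp - rm = LinearMap.id)
    (hadj : ∀ a b : g, B (rp a) b + B a (rm b) = 0) :
    LinearMap.ker rp = B.orthogonal (LinearMap.range rm)
    ∧ LinearMap.ker rm = B.orthogonal (LinearMap.range rp)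
    ∧ B.orthogonal (LinearMap.range rp) ≤ LinearMap.range rp
    ∧ B.orthogonal (LinearMap.range rm) ≤ LinearMap.range rm := by
  have hB : B.IsSymm := ⟨hsym⟩
  have hpair : IsAdjointPair B B rp ⇑(-rm) := fun a b => by
    rw [LinearMap.neg_apply, map_neg, eq_neg_iff_add_eq_zero, hadj]
  have hsum : rp + -rm = LinearMap.id := by rw [← sub_eq_add_neg, hdiff]
  have hker_p := BilinForm.ker_eq_orthogonal_range_of_isAdjointPair hB.isRefl hnondeg.1 hpair
  have hker_m := BilinForm.ker_eq_orthogonal_range_of_isAdjointPair hB.isRefl hnondeg.1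
    (BilinForm.isAdjointPair_swap_of_isSymm hB hpair)
  rw [range_neg] at hker_p
  rw [ker_neg] at hker_m
  refine ⟨hker_p, hker_m, ?_, ?_⟩
  · rw [← hker_m, ← ker_neg]
    exact ker_le_range_of_add_eq_id hsum
  · rw [← hker_p, ← range_neg]
    exact ker_le_range_of_add_eq_id (by rwa [add_comm])

/-- for a finite-dimensional quadratic Lie algebra `(g, ⟨,⟩)` and linear maps
`r♭₊ - r♭₋ = id` with `⟨r♭₊ x₁, x₂⟩ + ⟨x₁, r♭₋ x₂⟩ = 0`, setting `f± = Im r♭±`, one has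
`ker r♭₊ = f₋^⊥`, `ker r♭₋ = f₊^⊥`, `f₊^⊥ ⊆ f₊`, `f₋^⊥ ⊆ f₋`. -/
theorem stmt2 {k g : Type*} [Field k] [LieRing g] [LieAlgebra k g] [FiniteDimensional k g]
    (B : LinearMap.BilinForm k g)
    (hsym : ∀ a b : g, B a b = B b a)
    (hnondeg : B.Nondegenerate)
    (hinv : ∀ a b c : g, B ⁅a, b⁆ c = B a ⁅b, c⁆)
    (rp rm : g →ₗ[k] g)
    (hdiff : rp - rm = LinearMap.id)
    (hadj : ∀ a b : g, B (rp a) b + B a (rm b) = 0) :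
    LinearMap.ker rp = B.orthogonal (LinearMap.range rm)
    ∧ LinearMap.ker rm = B.orthogonal (LinearMap.range rp)
    ∧ B.orthogonal (LinearMap.range rp) ≤ LinearMap.range rp
    ∧ B.orthogonal (LinearMap.range rm) ≤ LinearMap.range rm :=
  stmt2_general B hsym hnondeg rp rm hdiff hadj
end

section
/- Let (g, ⟨,⟩_g) be a finite-dimensional quadratic Lie algebra and r^♭_± : g → g linear maps with r^♭_+ − r^♭_- = Id_g and ⟨r^♭_+(x₁), x₂⟩_g = −⟨x₁, r^♭_-(x₂)⟩_g for all x₁, x₂. Equip g ⊕ g with the symmetric bilinear form ⟨(x₁,x₂),(x₁′,x₂′)⟩ = ⟨x₁,x₁′⟩_g − ⟨x₂,x₂′⟩_g. Then the subspace l_r = {(r^♭_+(x), r^♭_-(x)) : x ∈ g} is isotropic (i.e. ⟨a,b⟩ = 0 for all a,b ∈ l_r), has dimension dim g, and g ⊕ g = g_diag ⊕ l_r is a direct sum of vector spaces, where g_diag = {(x,x) : x ∈ g}. -/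
/-!
Since `r₊ - r₋ = id`, the map `x ↦ (r₊ x, r₋ x)` is a section of `(a, b) ↦ a - b`, whose kernel is
the diagonal. A section of a linear map is injective and its range complements the kernel, which
gives both the dimension count and `g ⊕ g = g_diag ⊕ l_r`. Isotropy is the adjointness relation
`⟨r₊ x, y⟩ = -⟨x, r₋ y⟩` applied after splitting `r₊ y = r₋ y + y` and `r₊ x = r₋ x + x`.
-/

namespace LinearMap

variable {R M N : Type*} [Ring R] [AddCommGroup M] [Module R M] [AddCommGroup N] [Module R N]

theorem isCompl_ker_range_of_comp_eq_id {π : M →ₗ[R] N} {s : N →ₗ[R] M} (h : π ∘ₗ s = id) :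
    IsCompl (ker π) (range s) := by
  have hπs (y : N) : π (s y) = y := congr($h y)
  constructor
  · rw [Submodule.disjoint_def]
    rintro _ hx ⟨y, rfl⟩
    rw [mem_ker, hπs] at hx
    rw [hx, map_zero]
  · rw [codisjoint_iff_le_sup]
    intro x _
    refine Submodule.mem_sup.2 ⟨x - s (π x), ?_, s (π x), mem_range_self s _, sub_add_cancel _ _⟩
    rw [mem_ker, map_sub, hπs, sub_self]

theorem ker_fst_sub_snd : ker (fst R M M - snd R M M) = range (id.prod id) := by
  ext ⟨a, b⟩
  simp only [mem_ker, LinearMap.sub_apply, fst_apply, snd_apply, sub_eq_zero, mem_range,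
    prod_apply, Function.prod, id_apply, Prod.mk.injEq]
  exact ⟨fun h => ⟨b, h.symm, rfl⟩, fun ⟨_, ha, hb⟩ => ha.symm.trans hb⟩

theorem fst_sub_snd_comp_prod (f g : M →ₗ[R] M) : (fst R M M - snd R M M) ∘ₗ f.prod g = f - g :=
  rfl

theorem injective_prod_of_sub_eq_id {f g : M →ₗ[R] M} (h : f - g = id) :
    Function.Injective (f.prod g) := by
  refine Function.LeftInverse.injective (g := fst R M M - snd R M M) fun x => ?_
  rw [← comp_apply, fst_sub_snd_comp_prod, h, id_apply]

theorem isCompl_range_id_prod_id_range_prod {f g : M →ₗ[R] M} (h : f - g = id) :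
    IsCompl (range ((id : M →ₗ[R] M).prod id)) (range (f.prod g)) := by
  rw [← ker_fst_sub_snd]
  exact isCompl_ker_range_of_comp_eq_id (by rw [fst_sub_snd_comp_prod, h])

end LinearMap

namespace LinearMap.BilinForm

theorem apply_sub_apply_eq_zero_of_sub_eq_id {R M : Type*} [CommRing R] [AddCommGroup M]
    [Module R M] (B : LinearMap.BilinForm R M) {f g : M →ₗ[R] M} (h : f - g = id)
    (hadj : ∀ a b : M, B (f a) b + B a (g b) = 0) (x y : M) :
    B (f x) (f y) - B (g x) (g y) = 0 := by
  have hfg (z : M) : f z = g z + z := by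
    rw [← sub_eq_iff_eq_add', ← LinearMap.sub_apply, h, id_apply]
  calc B (f x) (f y) - B (g x) (g y) = B (f x) y + B x (g y) := by
        rw [hfg x, hfg y]; simp only [map_add, LinearMap.add_apply]; abel
    _ = 0 := hadj x y

end LinearMap.BilinForm

theorem stmt3_general {k g : Type*} [Field k] [LieRing g] [LieAlgebra k g]
    (B : LinearMap.BilinForm k g)
    (rp rm : g →ₗ[k] g)
    (hdiff : rp - rm = LinearMap.id)
    (hadj : ∀ a b : g, B (rp a) b + B a (rm b) = 0) :
    -- `l_r` is isotropic for the form `⟨(x₁,x₂),(x₁',x₂')⟩ = ⟨x₁,x₁'⟩ - ⟨x₂,x₂'⟩`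
    (∀ x x' : g, B (rp x) (rp x') - B (rm x) (rm x') = 0)
    -- `dim l_r = dim g`
    ∧ Module.finrank k (LinearMap.range (rp.prod rm)) = Module.finrank k g
    -- `g ⊕ g = g_diag ⊕ l_r`
    ∧ IsCompl (LinearMap.range ((LinearMap.id : g →ₗ[k] g).prod (LinearMap.id : g →ₗ[k] g)))
        (LinearMap.range (rp.prod rm)) :=
  ⟨B.apply_sub_apply_eq_zero_of_sub_eq_id hdiff hadj,
    LinearMap.finrank_range_of_inj (LinearMap.injective_prod_of_sub_eq_id hdiff),
    LinearMap.isCompl_range_id_prod_id_range_prod hdiff⟩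

/-- for a finite-dimensional quadratic Lie algebra `(g, ⟨,⟩)` and linear maps
`r♭₊ - r♭₋ = id` with `⟨r♭₊ x₁, x₂⟩ = -⟨x₁, r♭₋ x₂⟩`, the subspace
`l_r = {(r♭₊ x, r♭₋ x)}` of `g ⊕ g` (with the difference form) is isotropic, has
dimension `dim g`, and `g ⊕ g = g_diag ⊕ l_r`. -/
theorem stmt3 {k g : Type*} [Field k] [LieRing g] [LieAlgebra k g] [FiniteDimensional k g]
    (B : LinearMap.BilinForm k g)
    (hsym : ∀ a b : g, B a b = B b a)
    (hnondeg : B.Nondegenerate)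
    (hinv : ∀ a b c : g, B ⁅a, b⁆ c = B a ⁅b, c⁆)
    (rp rm : g →ₗ[k] g)
    (hdiff : rp - rm = LinearMap.id)
    (hadj : ∀ a b : g, B (rp a) b + B a (rm b) = 0) :
    -- `l_r` is isotropic for the form `⟨(x₁,x₂),(x₁',x₂')⟩ = ⟨x₁,x₁'⟩ - ⟨x₂,x₂'⟩`
    (∀ x x' : g, B (rp x) (rp x') - B (rm x) (rm x') = 0)
    -- `dim l_r = dim g`
    ∧ Module.finrank k (LinearMap.range (rp.prod rm)) = Module.finrank k g
    -- `g ⊕ g = g_diag ⊕ l_r`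
    ∧ IsCompl (LinearMap.range ((LinearMap.id : g →ₗ[k] g).prod (LinearMap.id : g →ₗ[k] g)))
        (LinearMap.range (rp.prod rm)) :=
  stmt3_general B rp rm hdiff hadj
end

section
/- Let (g, ⟨,⟩_g) be a finite-dimensional quadratic Lie algebra, r^♭_± : g → g linear maps with r^♭_+ − r^♭_- = Id_g and ⟨r^♭_+(x₁), x₂⟩_g = −⟨x₁, r^♭_-(x₂)⟩_g. Let f_± = Im(r^♭_±), and let m_+, m_- be subspaces of g with f_+ ⊆ m_+ and f_- ⊆ m_-. Let q be a subspace of g with q^⊥ ⊆ q. Then (m_+ ∩ m_-) + {r^♭_+(x) : x ∈ q^⊥} = m_+ ∩ (m_- + q^⊥). -/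
/-- in a finite-dimensional quadratic Lie algebra `(g, ⟨,⟩)` with
`r♭₊ - r♭₋ = id`, `⟨r♭₊ x₁, x₂⟩ + ⟨x₁, r♭₋ x₂⟩ = 0`, `f₊ = Im r♭₊ ⊆ m₊`,
`f₋ = Im r♭₋ ⊆ m₋`, and a subspace `q` with `q^⊥ ⊆ q`, one has
`(m₊ ∩ m₋) + r♭₊(q^⊥) = m₊ ∩ (m₋ + q^⊥)` (formula (eq-mm-perp) of the paper,
after identifying `q⁰ ⊂ g*` with `q^⊥ ⊂ g` via the form). -/
theorem stmt6 {k g : Type*} [Field k] [LieRing g] [LieAlgebra k g] [FiniteDimensional k g]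
    (B : LinearMap.BilinForm k g)
    (hsym : ∀ a b : g, B a b = B b a)
    (hnondeg : B.Nondegenerate)
    (hinv : ∀ a b c : g, B ⁅a, b⁆ c = B a ⁅b, c⁆)
    (rp rm : g →ₗ[k] g)
    (hdiff : rp - rm = LinearMap.id)
    (hadj : ∀ a b : g, B (rp a) b + B a (rm b) = 0)
    (mp mm q : Submodule k g)
    (hfp : LinearMap.range rp ≤ mp)
    (hfm : LinearMap.range rm ≤ mm)
    (hq : B.orthogonal q ≤ q) :
    (mp ⊓ mm) ⊔ Submodule.map rp (B.orthogonal q) = mp ⊓ (mm ⊔ B.orthogonal q) := by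
  have key : ∀ x : g, rp x = rm x + x := by
    intro x
    have := congrArg (fun f : g →ₗ[k] g => f x) hdiff
    simp only [LinearMap.sub_apply, LinearMap.id_apply] at this
    exact sub_eq_iff_eq_add'.mp this
  apply le_antisymm
  · apply sup_le
    · exact le_inf inf_le_left (inf_le_right.trans le_sup_left)
    · rintro _ ⟨x, hx, rfl⟩
      refine ⟨hfp ⟨x, rfl⟩, ?_⟩
      rw [key x]
      exact Submodule.add_mem_sup (hfm ⟨x, rfl⟩) hx
  · rintro y ⟨hymp, hy⟩
    obtain ⟨m, hm, x, hx, rfl⟩ := Submodule.mem_sup.mp hy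
    have h1 : m + x = (m - rm x) + rp x := by rw [key x]; abel
    rw [h1]
    refine Submodule.add_mem_sup ⟨?_, ?_⟩ ⟨x, hx, rfl⟩
    · have h2 : m - rm x = (m + x) - rp x := by rw [key x]; abel
      rw [h2]; exact Submodule.sub_mem _ hymp (hfp ⟨x, rfl⟩)
    · exact Submodule.sub_mem _ hm (hfm ⟨x, rfl⟩)
end

section
/- Let W be the Weyl group of a connected complex semisimple group G with opposite Borels B, B_-, and let ∗ denote the monoidal (Demazure) product on W, characterized by closure(B u B · B v B) = closure(B (u∗v) B). For u₁,…,u_n, v₁,…,v_n, w ∈ W, the set (Bu₁B·Bu₂B⋯Bu_nB) ∩ (B_-v₁B_-⋯B_-v_nB_- · BwB) is non-empty if and only if w ≤ (v₁ ∗ ⋯ ∗ v_n)^{-1} ∗ u₁ ∗ ⋯ ∗ u_n in the Bruhat order. -/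
open Pointwise

/-- The double coset `H g H` as a subset of `G`. -/
def dblCoset {G : Type*} [Group G] (H : Subgroup G) (g : G) : Set G :=
  (H : Set G) * {g} * (H : Set G)

/-- The product of double cosets `H u₁ H · H u₂ H ⋯ H u_n H` in `G`. -/
def dblCosetProd {G W : Type*} [Group G] (H : Subgroup G) (ρ : W → G)
    {n : ℕ} (u : Fin n → W) : Set G :=
  ((List.ofFn u).map fun x => dblCoset H (ρ x)).prod

/-- The Demazure product `u₁ ∗ u₂ ∗ ⋯ ∗ u_n`. -/
def demProd {W : Type*} [One W] (star : W → W → W) {n : ℕ} (u : Fin n → W) : W :=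
  (List.ofFn u).foldr star 1

/-- with `∗` the monoidal (Demazure) product on the Weyl group `W` of `G`
(with opposite Borels `B`, `B₋`), for `u₁,…,u_n, v₁,…,v_n, w ∈ W` the set
`(Bu₁B⋯Bu_nB) ∩ (B₋v₁B₋⋯B₋v_nB₋ · BwB)` is non-empty iff
`w ≤ (v₁ ∗ ⋯ ∗ v_n)⁻¹ ∗ u₁ ∗ ⋯ ∗ u_n` in the Bruhat order.  The properties of the
Bruhat order, the Demazure product, the `n = 1` case (Webster–Yakimov) and the
decompositions of products of double cosets listed in the context are hypotheses. -/
theorem stmt8 {G W : Type*} [Group G] [Group W] [PartialOrder W]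
    (B Bm : Subgroup G) (ρ : W → G) (star : W → W → W)
    (hassoc : ∀ u v w : W, star (star u v) w = star u (star v w))
    (hone : ∀ u : W, star 1 u = u ∧ star u 1 = u)
    (hmono : ∀ x u y v : W, x ≤ u → y ≤ v → star y⁻¹ x ≤ star v⁻¹ u)
    (hbase : ∀ u v w : W,
      (dblCoset B (ρ u) ∩ ((Bm : Set G) * {ρ v} * (Bm : Set G) * dblCoset B (ρ w))).Nonempty
        ↔ w ≤ star v⁻¹ u)
    (hdecB : ∀ (n : ℕ) (u : Fin n → W), ∃ U : Set W,
      (∀ x ∈ U, x ≤ demProd star u) ∧ demProd star u ∈ U ∧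
      dblCosetProd B ρ u = ⋃ x ∈ U, dblCoset B (ρ x))
    (hdecBm : ∀ (n : ℕ) (v : Fin n → W), ∃ U : Set W,
      (∀ y ∈ U, y ≤ demProd star v) ∧ demProd star v ∈ U ∧
      dblCosetProd Bm ρ v = ⋃ y ∈ U, dblCoset Bm (ρ y))
    (n : ℕ) (hn : 1 ≤ n) (u v : Fin n → W) (w : W) :
    (dblCosetProd B ρ u ∩ (dblCosetProd Bm ρ v * dblCoset B (ρ w))).Nonempty
      ↔ w ≤ star (demProd star v)⁻¹ (demProd star u) := by
  obtain ⟨U, hU, hUmem, hUeq⟩ := hdecB n u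
  obtain ⟨V, hV, hVmem, hVeq⟩ := hdecBm n v
  rw [hUeq, hVeq]
  constructor
  · rintro ⟨g, hg1, hg2⟩
    simp only [Set.mem_iUnion] at hg1
    obtain ⟨x, hx, hgx⟩ := hg1
    obtain ⟨a, ha, b, hb, rfl⟩ := hg2
    simp only [Set.mem_iUnion] at ha
    obtain ⟨y, hy, hay⟩ := ha
    have h1 : w ≤ star y⁻¹ x :=
      (hbase x y w).1 ⟨a * b, hgx, Set.mul_mem_mul hay hb⟩
    exact h1.trans (hmono x (demProd star u) y (demProd star v) (hU x hx) (hV y hy))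
  · intro h
    obtain ⟨g, hg1, hg2⟩ := (hbase _ _ w).2 h
    obtain ⟨a, ha, b, hb, rfl⟩ := hg2
    exact ⟨a * b, Set.mem_iUnion₂.2 ⟨_, hUmem, hg1⟩,
      Set.mul_mem_mul (Set.mem_iUnion₂.2 ⟨_, hVmem, ha⟩) hb⟩
end
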